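/- Let h₀ : ℝ → ℝ be defined by h₀(t) = 1/2 − 2|t − 3/4| for t ∈ [1/2, 1] and h₀(t) = 0 otherwise. For each sequence ε : ℕ → {0,1} define h_ε : [0,1] → ℝ by h_ε(t) = ∑_{m=0}^{∞} ε_m·2^{−m}·h₀(2^m·t). Then each h_ε is 2-Lipschitz, satisfies h_ε(0) = h_ε(1) = 0, satisfies h_ε(k/2ⁿ) = 2l/2ⁿ for some l ∈ ℤ for every reduced dyadic rational k/2ⁿ ∈ (0,1), and the map ε ↦ h_ε is injective. -/

import Mathlib

open Set
open scoped NNReal ENNReal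

noncomputable section

/-- The tent-like bump: `h₀ t = 1/2 − 2|t − 3/4|` on `[1/2, 1]` and `0` elsewhere. -/
def bump : ℝ → ℝ := fun t =>
  if t ∈ Set.Icc (1 / 2 : ℝ) 1 then 1 / 2 - 2 * |t - 3 / 4| else 0

lemma bump_eq (x : ℝ) : bump x = max 0 (1 / 2 - 2 * |x - 3 / 4|) := by
  unfold bump
  split_ifs with h
  · obtain ⟨h1, h2⟩ := h
    have : |x - 3 / 4| ≤ 1 / 4 := abs_le.2 ⟨by linarith, by linarith⟩
    rw [max_eq_right]; linarith
  · rw [Set.mem_Icc, not_and_or] at h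
    rw [max_eq_left]
    rcases h with h | h
    · push_neg at h
      have : 3 / 4 - x ≤ |x - 3 / 4| := by rw [abs_sub_comm]; exact le_abs_self _
      linarith
    · push_neg at h
      have : x - 3 / 4 ≤ |x - 3 / 4| := le_abs_self _
      linarith

lemma bump_nonneg (x : ℝ) : 0 ≤ bump x := by rw [bump_eq]; exact le_max_left _ _

lemma bump_zero_of_le {x : ℝ} (h : x ≤ 1 / 2) : bump x = 0 := by
  rw [bump_eq, max_eq_left]
  have : 3 / 4 - x ≤ |x - 3 / 4| := by rw [abs_sub_comm]; exact le_abs_self _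
  linarith

lemma bump_zero_of_ge {x : ℝ} (h : 1 ≤ x) : bump x = 0 := by
  rw [bump_eq, max_eq_left]
  have : x - 3 / 4 ≤ |x - 3 / 4| := le_abs_self _
  linarith

lemma bump_le_left {x : ℝ} (h : 1 / 2 ≤ x) : bump x ≤ 2 * (x - 1 / 2) := by
  rw [bump_eq]
  have : 3 / 4 - x ≤ |x - 3 / 4| := by rw [abs_sub_comm]; exact le_abs_self _
  exact max_le (by linarith) (by linarith)

lemma bump_le_right {x : ℝ} (h : x ≤ 1) : bump x ≤ 2 * (1 - x) := by
  rw [bump_eq]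
  have : x - 3 / 4 ≤ |x - 3 / 4| := le_abs_self _
  exact max_le (by linarith) (by linarith)

lemma bump_lip (x y : ℝ) : |bump x - bump y| ≤ 2 * |x - y| := by
  rw [bump_eq, bump_eq, max_comm 0 _, max_comm 0 _]
  calc |max (1 / 2 - 2 * |x - 3 / 4|) 0 - max (1 / 2 - 2 * |y - 3 / 4|) 0|
      ≤ |(1 / 2 - 2 * |x - 3 / 4|) - (1 / 2 - 2 * |y - 3 / 4|)| :=
        abs_max_sub_max_le_abs _ _ _
    _ = 2 * |(|x - 3 / 4| - |y - 3 / 4|)| := by rw [show (1 / 2 - 2 * |x - 3/4|) - (1 / 2 - 2 * |y - 3/4|) = 2 * (|y - 3/4| - |x - 3/4|) by ring, abs_mul, abs_two, abs_sub_comm]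
    _ ≤ 2 * |x - y| := by
        have h1 := abs_abs_sub_abs_le_abs_sub (x - 3 / 4) (y - 3 / 4)
        have h2 : x - 3 / 4 - (y - 3 / 4) = x - y := by ring
        rw [h2] at h1
        linarith

/-- For a sequence `ε : ℕ → {0,1}`, the function `h_ε t = ∑ₘ εₘ 2⁻ᵐ h₀(2ᵐ t)`. -/
def bumpSum (ε : ℕ → Fin 2) : ℝ → ℝ := fun t =>
  ∑' m : ℕ, ((ε m : ℕ) : ℝ) * (1 / 2 ^ m) * bump (2 ^ m * t)

lemma two_pow_le {m j : ℕ} (h : m ≤ j) : (2:ℝ) ^ m ≤ 2 ^ j :=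
  pow_le_pow_right₀ one_le_two h

lemma bumpSum_zero_of_nonpos (ε : ℕ → Fin 2) {t : ℝ} (ht : t ≤ 0) : bumpSum ε t = 0 := by
  have h : ∀ m : ℕ, ((ε m : ℕ) : ℝ) * (1 / 2 ^ m) * bump (2 ^ m * t) = 0 := by
    intro m
    rw [bump_zero_of_le (by nlinarith [pow_pos (by norm_num : (0:ℝ) < 2) m] : (2:ℝ) ^ m * t ≤ 1 / 2), mul_zero]
  simp only [bumpSum, h, tsum_zero]

lemma bumpSum_eq_single (ε : ℕ → Fin 2) {m : ℕ} {t : ℝ}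
    (h1 : 1 / 2 ^ (m + 1) < t) (h2 : t ≤ 1 / 2 ^ m) :
    bumpSum ε t = ((ε m : ℕ) : ℝ) * (1 / 2 ^ m) * bump (2 ^ m * t) := by
  refine tsum_eq_single m (fun j hj => ?_)
  have hpj : (0:ℝ) < 2 ^ j := pow_pos (by norm_num) j
  have hpm : (0:ℝ) < 2 ^ m := pow_pos (by norm_num) m
  rcases lt_or_gt_of_ne hj with hlt | hgt
  · have hle : (2:ℝ) ^ (j + 1) ≤ 2 ^ m := two_pow_le hlt
    have : (2:ℝ) ^ j * t ≤ 1 / 2 := by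
      have : (2:ℝ) ^ j * t ≤ 2 ^ j * (1 / 2 ^ m) := by nlinarith
      rw [pow_succ] at hle
      have h12 : (2:ℝ) ^ j / 2 ^ m ≤ 1 / 2 := by
        rw [div_le_div_iff₀ hpm (by norm_num)]
        nlinarith
      rw [mul_one_div] at this
      linarith
    rw [bump_zero_of_le this, mul_zero]
  · have hle : (2:ℝ) ^ (m + 1) ≤ 2 ^ j := two_pow_le hgt
    have hpm1 : (0:ℝ) < 2 ^ (m + 1) := pow_pos (by norm_num) (m + 1)
    have : (1:ℝ) ≤ 2 ^ j * t := by
      have ht' : 1 / 2 ^ (m + 1) < t := h1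
      rw [div_lt_iff₀ hpm1] at ht'
      nlinarith
    rw [bump_zero_of_ge this, mul_zero]

lemma exists_scale {t : ℝ} (h0 : 0 < t) (h1 : t ≤ 1) :
    ∃ m : ℕ, 1 / 2 ^ (m + 1) < t ∧ t ≤ 1 / 2 ^ m := by
  obtain ⟨n, hn⟩ := exists_pow_lt_of_lt_one h0 (by norm_num : (1:ℝ) / 2 < 1)
  have hn' : ∃ n : ℕ, 1 / 2 ^ n < t := ⟨n, by rwa [one_div_pow] at hn⟩
  classical
  set N := Nat.find hn' with hN
  have hNlt : 1 / 2 ^ N < t := Nat.find_spec hn'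
  have hNne : N ≠ 0 := by
    intro h
    rw [h] at hNlt
    norm_num at hNlt
    linarith
  obtain ⟨m, hm⟩ : ∃ m, N = m + 1 := ⟨N - 1, by omega⟩
  rw [hm] at hNlt
  refine ⟨m, hNlt, ?_⟩
  have := Nat.find_min hn' (m := m) (by omega)
  push_neg at this
  exact this

lemma eps_le_one (ε : ℕ → Fin 2) (m : ℕ) : ((ε m : ℕ) : ℝ) ≤ 1 := by
  have := (ε m).is_lt
  exact_mod_cast Nat.lt_succ_iff.mp this

lemma bumpSum_nonneg' (ε : ℕ → Fin 2) {m : ℕ} {t : ℝ}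
    (h1 : 1 / 2 ^ (m + 1) < t) (h2 : t ≤ 1 / 2 ^ m) : 0 ≤ bumpSum ε t := by
  rw [bumpSum_eq_single ε h1 h2]
  have := bump_nonneg (2 ^ m * t)
  positivity

lemma bumpSum_le_left (ε : ℕ → Fin 2) {m : ℕ} {t : ℝ}
    (h1 : 1 / 2 ^ (m + 1) < t) (h2 : t ≤ 1 / 2 ^ m) :
    bumpSum ε t ≤ 2 * (t - 1 / 2 ^ (m + 1)) := by
  rw [bumpSum_eq_single ε h1 h2]
  have hpm : (0:ℝ) < 2 ^ m := pow_pos (by norm_num) m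
  have hpm1 : (0:ℝ) < 2 ^ (m + 1) := pow_pos (by norm_num) (m + 1)
  have hhalf : (1:ℝ) / 2 ≤ 2 ^ m * t := by
    rw [div_lt_iff₀ hpm1, pow_succ] at h1
    rw [div_le_iff₀ (by norm_num : (0:ℝ) < 2)]
    nlinarith
  have hb := bump_le_left hhalf
  have hb0 := bump_nonneg (2 ^ m * t)
  have he1 := eps_le_one ε m
  have he0 : (0:ℝ) ≤ ((ε m : ℕ) : ℝ) := Nat.cast_nonneg _
  have hc : (0:ℝ) ≤ 1 / 2 ^ m := by positivity
  have hdrop : ((ε m : ℕ) : ℝ) * (1 / 2 ^ m) * bump (2 ^ m * t) ≤ (1 / 2 ^ m) * bump (2 ^ m * t) := by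
    nlinarith [mul_nonneg hc hb0]
  have hmul := mul_le_mul_of_nonneg_left hb hc
  have hexp : (1:ℝ) / 2 ^ m * (2 * (2 ^ m * t - 1 / 2)) = 2 * t - 1 / 2 ^ m := by
    field_simp
  have hq : (1:ℝ) / 2 ^ (m + 1) = (1 / 2 ^ m) / 2 := by
    rw [pow_succ, ← div_div]
  rw [hq]
  linarith

lemma bumpSum_le_right (ε : ℕ → Fin 2) {m : ℕ} {t : ℝ}
    (h1 : 1 / 2 ^ (m + 1) < t) (h2 : t ≤ 1 / 2 ^ m) :
    bumpSum ε t ≤ 2 * (1 / 2 ^ m - t) := by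
  rw [bumpSum_eq_single ε h1 h2]
  have hpm : (0:ℝ) < 2 ^ m := pow_pos (by norm_num) m
  have hone : (2:ℝ) ^ m * t ≤ 1 := by
    rw [le_div_iff₀ hpm] at h2
    linarith
  have hb := bump_le_right hone
  have hb0 := bump_nonneg (2 ^ m * t)
  have he1 := eps_le_one ε m
  have he0 : (0:ℝ) ≤ ((ε m : ℕ) : ℝ) := Nat.cast_nonneg _
  have hc : (0:ℝ) ≤ 1 / 2 ^ m := by positivity
  have hdrop : ((ε m : ℕ) : ℝ) * (1 / 2 ^ m) * bump (2 ^ m * t) ≤ (1 / 2 ^ m) * bump (2 ^ m * t) := by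
    nlinarith [mul_nonneg hc hb0]
  have hmul := mul_le_mul_of_nonneg_left hb hc
  have hexp : (1:ℝ) / 2 ^ m * (2 * (1 - 2 ^ m * t)) = 2 * (1 / 2 ^ m - t) := by
    field_simp
  linarith

lemma bumpSum_key (ε : ℕ → Fin 2) {s t : ℝ} (hs : 0 ≤ s) (hst : s ≤ t) (ht : t ≤ 1) :
    |bumpSum ε t - bumpSum ε s| ≤ 2 * (t - s) := by
  rcases eq_or_lt_of_le hst with rfl | hlt
  · simp
  have ht0 : 0 < t := lt_of_le_of_lt hs hlt
  obtain ⟨m, hm1, hm2⟩ := exists_scale ht0 ht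
  rcases le_or_gt s (1 / 2 ^ (m + 1)) with hcase | hcase
  · -- s below the interval of t
    have hFt0 : 0 ≤ bumpSum ε t := bumpSum_nonneg' ε hm1 hm2
    have hFt := bumpSum_le_left ε hm1 hm2
    have hFs0 : 0 ≤ bumpSum ε s ∧ bumpSum ε s ≤ 2 * (1 / 2 ^ (m + 1) - s) := by
      rcases eq_or_lt_of_le hs with rfl | hs0
      · rw [bumpSum_zero_of_nonpos ε le_rfl]
        constructor
        · exact le_rfl
        · nlinarith
      · obtain ⟨j, hj1, hj2⟩ := exists_scale hs0 (le_trans hcase (by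
          have h10 : (1:ℝ) = 2 ^ (0:ℕ) := (pow_zero 2).symm
          rw [div_le_one (by positivity), h10]
          exact two_pow_le (Nat.zero_le _)))
        have hmj : m + 1 ≤ j := by
          by_contra hcon
          push_neg at hcon
          have : (1:ℝ) / 2 ^ (m+1) ≤ 1 / 2 ^ (j+1) := by
            apply one_div_le_one_div_of_le (by positivity)
            exact two_pow_le (by omega)
          linarith
        have hpow : (1:ℝ) / 2 ^ j ≤ 1 / 2 ^ (m + 1) := by
          apply one_div_le_one_div_of_le (by positivity)
          exact two_pow_le hmj
        refine ⟨bumpSum_nonneg' ε hj1 hj2, ?_⟩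
        have := bumpSum_le_right ε hj1 hj2
        linarith
    rw [abs_sub_le_iff]
    exact ⟨by linarith [hFs0.1], by linarith [hFs0.2]⟩
  · -- both in the same interval
    rw [bumpSum_eq_single ε hm1 hm2, bumpSum_eq_single ε hcase (le_trans hst hm2)]
    have hpm : (0:ℝ) < 2 ^ m := pow_pos (by norm_num) m
    have hlipb := bump_lip (2 ^ m * t) (2 ^ m * s)
    have harg : |2 ^ m * t - 2 ^ m * s| = 2 ^ m * (t - s) := by
      rw [← mul_sub, abs_mul, abs_of_nonneg hpm.le, abs_of_nonneg (by linarith)]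
    rw [harg] at hlipb
    have he1 := eps_le_one ε m
    have he0 : (0:ℝ) ≤ ((ε m : ℕ) : ℝ) := Nat.cast_nonneg _
    have hrw : ((ε m : ℕ) : ℝ) * (1 / 2 ^ m) * bump (2 ^ m * t)
        - ((ε m : ℕ) : ℝ) * (1 / 2 ^ m) * bump (2 ^ m * s)
        = ((ε m : ℕ) : ℝ) * (1 / 2 ^ m) * (bump (2 ^ m * t) - bump (2 ^ m * s)) := by ring
    rw [hrw, abs_mul, abs_of_nonneg (by positivity : (0:ℝ) ≤ ((ε m : ℕ) : ℝ) * (1 / 2 ^ m))]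
    have hinv : (1:ℝ) / 2 ^ m * 2 ^ m = 1 := one_div_mul_cancel hpm.ne'
    have habs0 := abs_nonneg (bump (2 ^ m * t) - bump (2 ^ m * s))
    have hc : (0:ℝ) ≤ 1 / 2 ^ m := by positivity
    have hmul := mul_le_mul_of_nonneg_left hlipb hc
    nlinarith [mul_nonneg hc habs0]

/-- Each `h_ε` is 2-Lipschitz on `[0,1]`, vanishes at `0` and `1`, takes values in
`(2/2ⁿ)·ℤ` at every reduced dyadic rational `k/2ⁿ ∈ (0,1)`, and `ε ↦ h_ε` is injective
(as functions on `[0,1]`). -/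
theorem bumpSum_properties :
    (∀ ε : ℕ → Fin 2,
      LipschitzOnWith 2 (bumpSum ε) (Set.Icc (0 : ℝ) 1) ∧
      bumpSum ε 0 = 0 ∧ bumpSum ε 1 = 0 ∧
      ∀ n k : ℕ, Odd k → k < 2 ^ n →
        ∃ l : ℤ, bumpSum ε ((k : ℝ) / 2 ^ n) = 2 * (l : ℝ) / 2 ^ n) ∧
    ∀ ε ε' : ℕ → Fin 2, Set.EqOn (bumpSum ε) (bumpSum ε') (Set.Icc (0 : ℝ) 1) → ε = ε' := by
  constructor
  · intro ε
    refine ⟨?_, ?_, ?_, ?_⟩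
    · -- Lipschitz
      apply LipschitzOnWith.of_dist_le_mul
      intro x hx y hy
      rw [Real.dist_eq, Real.dist_eq, show ((2:ℝ≥0):ℝ) = 2 by norm_num]
      rcases le_total x y with h | h
      · have := bumpSum_key ε hx.1 h hy.2
        rw [abs_sub_comm, abs_of_nonpos (by linarith : x - y ≤ 0)]
        linarith
      · have := bumpSum_key ε hy.1 h hx.2
        rw [abs_of_nonneg (by linarith : 0 ≤ x - y)]
        linarith
    · exact bumpSum_zero_of_nonpos ε le_rfl
    · rw [bumpSum_eq_single ε (m := 0) (by norm_num) (by norm_num),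
        show ((2:ℝ)^(0:ℕ) * 1) = 1 by norm_num, bump_zero_of_ge le_rfl, mul_zero]
    · -- dyadic values
      intro n k hodd hklt
      have hk1 : 1 ≤ k := by
        rw [Nat.odd_iff] at hodd; omega
      have hn2 : (0:ℝ) < 2 ^ n := by positivity
      have hk0 : (0:ℝ) < (k:ℝ) := by exact_mod_cast hk1
      have ht0 : 0 < (k:ℝ) / 2 ^ n := by positivity
      have ht1 : (k:ℝ) / 2 ^ n ≤ 1 := by
        rw [div_le_one hn2]
        exact_mod_cast hklt.le
      obtain ⟨m, hm1, hm2⟩ := exists_scale ht0 ht1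
      have hpm1 : (0:ℝ) < 2 ^ (m+1) := by positivity
      have hpm : (0:ℝ) < 2 ^ m := by positivity
      have hA : 2 ^ n < k * 2 ^ (m+1) := by
        rw [div_lt_div_iff₀ hpm1 hn2, one_mul] at hm1
        exact_mod_cast hm1
      have hB : k * 2 ^ m ≤ 2 ^ n := by
        rw [div_le_div_iff₀ hn2 hpm, one_mul] at hm2
        exact_mod_cast hm2
      have hmn : m ≤ n := by
        by_contra hcon
        push_neg at hcon
        have h1 : (2:ℕ) ^ n < 2 ^ m := Nat.pow_lt_pow_right (by norm_num) hcon
        have h2 : 2 ^ m ≤ k * 2 ^ m := Nat.le_mul_of_pos_left _ (by omega)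
        omega
      obtain ⟨d, rfl⟩ : ∃ d, n = m + d := ⟨n - m, by omega⟩
      rw [pow_add] at hA hB
      have hC : k ≤ 2 ^ d := by
        have h2m : 0 < 2 ^ m := Nat.pow_pos (by norm_num)
        nlinarith
      have hD : 2 ^ d < 2 * k := by
        have h2m : 0 < 2 ^ m := Nat.pow_pos (by norm_num)
        rw [pow_succ] at hA
        nlinarith
      match d, hC, hD with
      | 0, hC, hD =>
        refine ⟨0, ?_⟩
        have hk : k = 1 := by omega
        subst hk
        rw [bumpSum_eq_single ε hm1 hm2]
        have harg : (2:ℝ) ^ m * ((1:ℕ) / 2 ^ (m + 0) : ℝ) = 1 := by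
          push_cast
          field_simp
          simp
        rw [harg, bump_zero_of_ge le_rfl, mul_zero]
        norm_num
      | 1, hC, hD =>
        exfalso
        rw [Nat.odd_iff] at hodd
        omega
      | (e+2), hC, hD =>
        have hE : 2 ^ (e+1) < k := by
          have : (2:ℕ) ^ (e+2) = 2 * 2 ^ (e+1) := by ring
          omega
        have hpe : (0:ℝ) < 2 ^ (e+2) := by positivity
        have hCr : (k:ℝ) ≤ 2 ^ (e+2) := by exact_mod_cast hC
        have hEr : (2:ℝ) ^ (e+1) < k := by exact_mod_cast hE
        have harg : (2:ℝ) ^ m * ((k:ℝ) / 2 ^ (m + (e+2))) = (k:ℝ) / 2 ^ (e+2) := by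
          rw [pow_add]
          field_simp
        have hx1 : (1:ℝ) / 2 ≤ (k:ℝ) / 2 ^ (e+2) := by
          rw [div_le_div_iff₀ (by norm_num) hpe]
          have : (2:ℝ) ^ (e+2) = 2 * 2 ^ (e+1) := by ring
          nlinarith
        have hx2 : (k:ℝ) / 2 ^ (e+2) ≤ 1 := by
          rw [div_le_one hpe]
          exact hCr
        refine ⟨(ε m : ℤ) * (2 ^ e - |(k:ℤ) - 3 * 2 ^ e|), ?_⟩
        rw [bumpSum_eq_single ε hm1 hm2, harg]
        unfold bump
        rw [if_pos (Set.mem_Icc.mpr ⟨hx1, hx2⟩)]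
        have habs : |(k:ℝ) / 2 ^ (e+2) - 3 / 4| = |(k:ℝ) - 3 * 2 ^ e| / 2 ^ (e+2) := by
          have h : (k:ℝ) / 2 ^ (e+2) - 3 / 4 = ((k:ℝ) - 3 * 2 ^ e) / 2 ^ (e+2) := by
            field_simp
            ring
          rw [h, abs_div, abs_of_pos hpe]
        rw [habs]
        push_cast
        rw [pow_add]
        field_simp
        ring
  · -- injectivity
    intro ε ε' heq
    funext m
    have hpm : (0:ℝ) < 2 ^ m := by positivity
    have hpm2 : (0:ℝ) < 2 ^ (m+2) := by positivity
    have h42 : (2:ℝ) ^ (m+2) = 4 * 2 ^ m := by ring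
    have hmem : (3:ℝ) / 2 ^ (m+2) ∈ Set.Icc (0:ℝ) 1 := by
      constructor
      · positivity
      · rw [div_le_one hpm2]
        have h1m : (1:ℝ) ≤ 2 ^ m := by
          have := two_pow_le (Nat.zero_le m)
          simpa using this
        nlinarith
    have h1 : 1 / 2 ^ (m+1) < (3:ℝ) / 2 ^ (m+2) := by
      rw [div_lt_div_iff₀ (by positivity) hpm2]
      have : (2:ℝ) ^ (m+2) = 2 * 2 ^ (m+1) := by ring
      nlinarith [pow_pos (by norm_num : (0:ℝ) < 2) (m+1)]
    have h2 : (3:ℝ) / 2 ^ (m+2) ≤ 1 / 2 ^ m := by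
      rw [div_le_div_iff₀ hpm2 hpm]
      nlinarith
    have heval := heq hmem
    rw [bumpSum_eq_single ε h1 h2, bumpSum_eq_single ε' h1 h2] at heval
    have harg : (2:ℝ) ^ m * ((3:ℝ) / 2 ^ (m+2)) = 3 / 4 := by
      rw [h42]
      field_simp
    rw [harg] at heval
    have hb : bump (3/4) = 1/2 := by
      norm_num [bump]
    rw [hb] at heval
    have hcast : ((ε m : ℕ) : ℝ) = ((ε' m : ℕ) : ℝ) := by
      field_simp at heval
      exact_mod_cast heval
    exact Fin.ext (by exact_mod_cast hcast)
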